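/- Let S be a semigroup with a stable minimal ideal M having at least two R-classes and at least two L-classes, and let C = (I, N) be a retractable IN-pair on S with retraction f : I → M. Then the congruences λ_C = Δ_S ∪ ν_N ∪ {(x,y) ∈ I×I : xf L yf} and ρ_C = Δ_S ∪ ν_N ∪ {(x,y) ∈ I×I : xf R yf} are incomparable in the congruence lattice of S, their intersection is μ_C = Δ_S ∪ ν_N ∪ {(x,y) ∈ I×I : xf H yf}, and their join is R_C = Δ_S ∪ ν_N ∪ (I×I). -/

import Mathlib

namespace SG

variable {S : Type*} [Semigroup S]

/-- An ideal of a semigroup: a nonempty subset closed under left and right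
multiplication by arbitrary elements. -/
def IsIdeal (I : Set S) : Prop :=
  I.Nonempty ∧ ∀ x ∈ I, ∀ a : S, a * x ∈ I ∧ x * a ∈ I

/-- The minimal ideal: an ideal contained in every ideal. -/
def IsMinIdeal (M : Set S) : Prop :=
  IsIdeal M ∧ ∀ I : Set S, IsIdeal I → M ⊆ I

/-- Every element of the set is regular. -/
def RegularSet (M : Set S) : Prop := ∀ m ∈ M, ∃ y : S, m * y * m = m

/-- `f` is a retraction of the ideal `I` onto the minimal ideal `M`:
a homomorphism `I → M` fixing `M` pointwise. -/
def IsRetraction (I M : Set S) (f : S → S) : Prop :=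
  (∀ x ∈ I, f x ∈ M) ∧ (∀ x ∈ I, ∀ y ∈ I, f (x * y) = f x * f y) ∧ ∀ x ∈ M, f x = x

/-- Green's R relation (via S¹ = `WithOne S`). -/
def GreenR (a b : S) : Prop :=
  (∃ u : WithOne S, (a : WithOne S) * u = (b : WithOne S)) ∧
    ∃ v : WithOne S, (b : WithOne S) * v = (a : WithOne S)

/-- Green's L relation. -/
def GreenL (a b : S) : Prop :=
  (∃ u : WithOne S, u * (a : WithOne S) = (b : WithOne S)) ∧
    ∃ v : WithOne S, v * (b : WithOne S) = (a : WithOne S)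

/-- Green's J relation. -/
def GreenJ (a b : S) : Prop :=
  (∃ u v : WithOne S, u * (a : WithOne S) * v = (b : WithOne S)) ∧
    ∃ u v : WithOne S, u * (b : WithOne S) * v = (a : WithOne S)

/-- Green's H relation. -/
def GreenH (a b : S) : Prop := GreenR a b ∧ GreenL a b

/-- Green's D relation, as R ∘ L. -/
def GreenD (a b : S) : Prop := ∃ c : S, GreenR a c ∧ GreenL c b

/-- A set is stable if for its elements `x`: `xa J x → xa R x` and `ax J x → ax L x`. -/
def StableSet (J : Set S) : Prop :=
  ∀ x ∈ J, ∀ a : S, (GreenJ (x * a) x → GreenR (x * a) x) ∧ (GreenJ (a * x) x → GreenL (a * x) x)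

/-- The set is a J-class. -/
def IsJClass (J : Set S) : Prop := ∃ a : S, J = {b | GreenJ a b}

/-- The set is a D-class. -/
def IsDClass (J : Set S) : Prop := ∃ a : S, J = {b | GreenD a b}

/-- A binary relation is a congruence on the semigroup. -/
def IsCongruence (r : S → S → Prop) : Prop :=
  Equivalence r ∧ ∀ a b c : S, r a b → r (c * a) (c * b) ∧ r (a * c) (b * c)

/-- `N` is a normal subgroup of the subgroup `G` of `S` with identity `e`. -/
def IsNormalIn (N G : Set S) (e : S) : Prop :=
  N ⊆ G ∧ e ∈ N ∧ (∀ x ∈ N, ∀ y ∈ N, x * y ∈ N) ∧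
    (∀ x ∈ N, ∃ y ∈ N, x * y = e ∧ y * x = e) ∧
    ∀ g ∈ G, ∀ g' ∈ G, g * g' = e → g' * g = e → ∀ x ∈ N, g * x * g' ∈ N

/-- The relation ν_N = S¹(N × N)S¹ ∩ (J × J). -/
def Nu (J N : Set S) (a b : S) : Prop :=
  a ∈ J ∧ b ∈ J ∧ ∃ x ∈ N, ∃ y ∈ N, ∃ s t : WithOne S,
    s * (x : WithOne S) * t = (a : WithOne S) ∧ s * (y : WithOne S) * t = (b : WithOne S)

/-- `J` is disjoint from `I` and is minimal among the J-classes of `S \ I`. -/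
def MinimalJClassOutside (J I : Set S) : Prop :=
  (∀ a ∈ J, a ∉ I) ∧
    ∀ b : S, b ∉ I →
      (∃ a ∈ J, ∃ u v : WithOne S, u * (a : WithOne S) * v = (b : WithOne S)) → b ∈ J

end SG

namespace SG

variable {S : Type*} [Semigroup S]

/-- The congruence `λ_C` associated to a retractable IN-pair `C = (I, N)`. -/
def LamRel (I J N : Set S) (f : S → S) (x y : S) : Prop :=
  x = y ∨ Nu J N x y ∨ (x ∈ I ∧ y ∈ I ∧ GreenL (f x) (f y))

/-- The congruence `ρ_C`. -/
def RhoRel (I J N : Set S) (f : S → S) (x y : S) : Prop :=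
  x = y ∨ Nu J N x y ∨ (x ∈ I ∧ y ∈ I ∧ GreenR (f x) (f y))

/-- The congruence `μ_C`. -/
def MuRel (I J N : Set S) (f : S → S) (x y : S) : Prop :=
  x = y ∨ Nu J N x y ∨ (x ∈ I ∧ y ∈ I ∧ GreenH (f x) (f y))

/-- The congruence `R_C`. -/
def RRel (I J N : Set S) (x y : S) : Prop :=
  x = y ∨ Nu J N x y ∨ (x ∈ I ∧ y ∈ I)

end SG

/-!
All four relations have the shape `Δ_S ∪ ν_N ∪ (θ ∩ I × I)`, and such a relation is a
congruence as soon as `θ` is compatible on `I` and collapses the products of `ν_N`-pairs that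
fall into `I`. The relation `ν_N` is an equivalence because each pair has a normal form
`(p e q, p n q)` with `n ∈ N` which, `N` being normal in `H_e`, does not depend on the
factorisation of `p e q`. A `ν_N`-pair is `H`-related, so multiplying it either stays in `J`,
and then in `ν_N`, or lands in `I` with both entries; there `f` identifies the two, because
elements of `M` do not distinguish `e` from the elements of `N`. For `θ` the pull-back along `f`
of `L`, `R` or `H`, compatibility comes from `f (c x) L f x` and `f (x c) R f x` in the stable
minimal ideal `M`. Finally `x` and `y x` (for `x, y ∈ M`) separate `λ_C` from `ρ_C`, and `R_C`
is their join because `x λ f x ρ (f x)(f y) λ f y λ y` for all `x, y ∈ I`.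
-/

namespace SG

variable {S : Type*} [Semigroup S]

lemma exists_mul_coe_eq_coe (s : WithOne S) (x : S) : ∃ p : S, s * x = p := by
  induction s using WithOne.recOneCoe with
  | one => exact ⟨x, one_mul _⟩
  | coe s => exact ⟨s * x, (WithOne.coe_mul s x).symm⟩

lemma exists_coe_mul_eq_coe (x : S) (s : WithOne S) : ∃ p : S, x * s = p := by
  induction s using WithOne.recOneCoe with
  | one => exact ⟨x, mul_one _⟩
  | coe s => exact ⟨x * s, (WithOne.coe_mul x s).symm⟩

section Green

variable {a b c e : S}

namespace GreenR

protected lemma refl (a : S) : GreenR a a := ⟨⟨1, mul_one _⟩, ⟨1, mul_one _⟩⟩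

protected lemma symm (h : GreenR a b) : GreenR b a := ⟨h.2, h.1⟩

protected lemma trans (h₁ : GreenR a b) (h₂ : GreenR b c) : GreenR a c := by
  obtain ⟨⟨u₁, hu₁⟩, ⟨v₁, hv₁⟩⟩ := h₁
  obtain ⟨⟨u₂, hu₂⟩, ⟨v₂, hv₂⟩⟩ := h₂
  exact ⟨⟨u₁ * u₂, by rw [← mul_assoc, hu₁, hu₂]⟩,
    ⟨v₂ * v₁, by rw [← mul_assoc, hv₂, hv₁]⟩⟩

lemma greenJ (h : GreenR a b) : GreenJ a b := by
  obtain ⟨⟨u, hu⟩, ⟨v, hv⟩⟩ := h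
  exact ⟨⟨1, u, by rw [one_mul, hu]⟩, ⟨1, v, by rw [one_mul, hv]⟩⟩

lemma mul_left (h : GreenR a b) (c : S) : GreenR (c * a) (c * b) := by
  obtain ⟨⟨u, hu⟩, ⟨v, hv⟩⟩ := h
  exact ⟨⟨u, by rw [WithOne.coe_mul, mul_assoc, hu, WithOne.coe_mul]⟩,
    ⟨v, by rw [WithOne.coe_mul, mul_assoc, hv, WithOne.coe_mul]⟩⟩

lemma mul_eq_of_mul_eq {h : S} (hh : h * a = a) (hab : GreenR a b) : h * b = b := by
  obtain ⟨⟨u, hu⟩, -⟩ := hab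
  apply WithOne.coe_inj.1
  rw [WithOne.coe_mul, ← hu, ← mul_assoc, ← WithOne.coe_mul, hh]

end GreenR

namespace GreenL

protected lemma refl (a : S) : GreenL a a := ⟨⟨1, one_mul _⟩, ⟨1, one_mul _⟩⟩

protected lemma symm (h : GreenL a b) : GreenL b a := ⟨h.2, h.1⟩

protected lemma trans (h₁ : GreenL a b) (h₂ : GreenL b c) : GreenL a c := by
  obtain ⟨⟨u₁, hu₁⟩, ⟨v₁, hv₁⟩⟩ := h₁
  obtain ⟨⟨u₂, hu₂⟩, ⟨v₂, hv₂⟩⟩ := h₂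
  exact ⟨⟨u₂ * u₁, by rw [mul_assoc, hu₁, hu₂]⟩,
    ⟨v₁ * v₂, by rw [mul_assoc, hv₂, hv₁]⟩⟩

lemma greenJ (h : GreenL a b) : GreenJ a b := by
  obtain ⟨⟨u, hu⟩, ⟨v, hv⟩⟩ := h
  exact ⟨⟨u, 1, by rw [mul_one, hu]⟩, ⟨v, 1, by rw [mul_one, hv]⟩⟩

lemma mul_right (h : GreenL a b) (c : S) : GreenL (a * c) (b * c) := by
  obtain ⟨⟨u, hu⟩, ⟨v, hv⟩⟩ := h
  exact ⟨⟨u, by rw [WithOne.coe_mul, ← mul_assoc, hu, WithOne.coe_mul]⟩,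
    ⟨v, by rw [WithOne.coe_mul, ← mul_assoc, hv, WithOne.coe_mul]⟩⟩

lemma mul_eq_of_mul_eq {h : S} (hh : a * h = a) (hab : GreenL a b) : b * h = b := by
  obtain ⟨⟨u, hu⟩, -⟩ := hab
  apply WithOne.coe_inj.1
  rw [WithOne.coe_mul, ← hu, mul_assoc, ← WithOne.coe_mul, hh]

end GreenL

namespace GreenH

protected lemma refl (a : S) : GreenH a a := ⟨GreenR.refl a, GreenL.refl a⟩

protected lemma symm (h : GreenH a b) : GreenH b a := ⟨h.1.symm, h.2.symm⟩

protected lemma trans (h₁ : GreenH a b) (h₂ : GreenH b c) : GreenH a c :=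
  ⟨h₁.1.trans h₂.1, h₁.2.trans h₂.2⟩

end GreenH

protected lemma GreenJ.symm (h : GreenJ a b) : GreenJ b a := ⟨h.2, h.1⟩

protected lemma GreenJ.trans (h₁ : GreenJ a b) (h₂ : GreenJ b c) : GreenJ a c := by
  obtain ⟨⟨u₁, v₁, h₁⟩, ⟨u₁', v₁', h₁'⟩⟩ := h₁
  obtain ⟨⟨u₂, v₂, h₂⟩, ⟨u₂', v₂', h₂'⟩⟩ := h₂
  exact ⟨⟨u₂ * u₁, v₁ * v₂, by rw [← h₂, ← h₁]; simp only [mul_assoc]⟩,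
    ⟨u₁' * u₂', v₂' * v₁', by rw [← h₁', ← h₂']; simp only [mul_assoc]⟩⟩

lemma exists_mul_eq_of_greenL (he : e * e = e) (h : GreenL a e) : ∃ α : S, α * a = e := by
  obtain ⟨⟨u, hu⟩, -⟩ := h
  obtain ⟨α, hα⟩ := exists_coe_mul_eq_coe e u
  refine ⟨α, WithOne.coe_inj.1 ?_⟩
  rw [WithOne.coe_mul, ← hα, mul_assoc, hu, ← WithOne.coe_mul, he]

lemma exists_mul_eq_of_greenR (he : e * e = e) (h : GreenR a e) : ∃ β : S, a * β = e := by
  obtain ⟨⟨u, hu⟩, -⟩ := h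
  obtain ⟨β, hβ⟩ := exists_mul_coe_eq_coe u e
  refine ⟨β, WithOne.coe_inj.1 ?_⟩
  rw [WithOne.coe_mul, ← hβ, ← mul_assoc, hu, ← WithOne.coe_mul, he]

lemma mul_mul_eq_of_greenR {α : S} (hα : α * a = e) (ha : a * e = a) (h : GreenR a b) :
    a * (α * b) = b := by
  obtain ⟨⟨w, hw⟩, -⟩ := h
  apply WithOne.coe_inj.1
  calc ((a * (α * b) : S) : WithOne S) = ((a * α : S) : WithOne S) * (a * w) := by
        rw [hw]; push_cast; simp only [mul_assoc]
    _ = ((a * α * a : S) : WithOne S) * w := by push_cast; simp only [mul_assoc]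
    _ = b := by rw [mul_assoc, hα, ha, hw]

lemma mul_mul_eq_of_greenL {β : S} (hβ : a * β = e) (ha : e * a = a) (h : GreenL a b) :
    b * β * a = b := by
  obtain ⟨⟨w, hw⟩, -⟩ := h
  apply WithOne.coe_inj.1
  calc ((b * β * a : S) : WithOne S) = (w * a) * ((β * a : S) : WithOne S) := by
        rw [hw]; push_cast; simp only [mul_assoc]
    _ = w * ((a * β * a : S) : WithOne S) := by push_cast; simp only [mul_assoc]
    _ = b := by rw [hβ, ha, hw]

lemma mul_eq_of_mul_eq_idem {g h : S} (he : e * e = e) (hg : GreenH g e) (hh : GreenR h e)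
    (hgh : g * h = e) : h * g = e := by
  obtain ⟨γ, hγ⟩ := exists_mul_eq_of_greenL he hg.2
  have heg : e * g = g := hg.1.symm.mul_eq_of_mul_eq he
  calc h * g = γ * g * h * g := by rw [hγ, hh.symm.mul_eq_of_mul_eq he]
    _ = γ * (g * h) * g := by simp only [mul_assoc]
    _ = e := by rw [hgh, mul_assoc, heg, hγ]

end Green

section Ideal

variable {I J : Set S} {a b c x y : S}

namespace IsIdeal

lemma mul_mem_left (hI : IsIdeal I) (hx : x ∈ I) (a : S) : a * x ∈ I := (hI.2 x hx a).1

lemma mul_mem_right (hI : IsIdeal I) (hx : x ∈ I) (a : S) : x * a ∈ I := (hI.2 x hx a).2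

lemma exists_mul_coe_mem (hI : IsIdeal I) (hx : x ∈ I) (s : WithOne S) :
    ∃ p ∈ I, s * x = p := by
  induction s using WithOne.recOneCoe with
  | one => exact ⟨x, hx, one_mul _⟩
  | coe s => exact ⟨s * x, hI.mul_mem_left hx s, (WithOne.coe_mul s x).symm⟩

lemma exists_coe_mul_mem (hI : IsIdeal I) (hx : x ∈ I) (s : WithOne S) :
    ∃ p ∈ I, x * s = p := by
  induction s using WithOne.recOneCoe with
  | one => exact ⟨x, hx, mul_one _⟩
  | coe s => exact ⟨x * s, hI.mul_mem_right hx s, (WithOne.coe_mul x s).symm⟩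

lemma mem_of_greenR (hI : IsIdeal I) (hx : x ∈ I) (h : GreenR x y) : y ∈ I := by
  obtain ⟨⟨u, hu⟩, -⟩ := h
  obtain ⟨p, hp, hpu⟩ := hI.exists_coe_mul_mem hx u
  rwa [← WithOne.coe_inj.1 (hpu.symm.trans hu)]

lemma mem_of_greenL (hI : IsIdeal I) (hx : x ∈ I) (h : GreenL x y) : y ∈ I := by
  obtain ⟨⟨u, hu⟩, -⟩ := h
  obtain ⟨p, hp, hpu⟩ := hI.exists_mul_coe_mem hx u
  rwa [← WithOne.coe_inj.1 (hpu.symm.trans hu)]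

end IsIdeal

lemma IsJClass.greenJ (hJ : IsJClass J) (ha : a ∈ J) (hb : b ∈ J) : GreenJ a b := by
  obtain ⟨a₀, rfl⟩ := hJ
  exact GreenJ.trans (GreenJ.symm ha) hb

lemma IsJClass.mem_of_greenJ (hJ : IsJClass J) (ha : a ∈ J) (h : GreenJ a b) : b ∈ J := by
  obtain ⟨a₀, rfl⟩ := hJ
  exact GreenJ.trans ha h

namespace MinimalJClassOutside

lemma mul_left_mem (hmin : MinimalJClassOutside J I) (ha : a ∈ J) (hca : c * a ∉ I) :
    c * a ∈ J :=
  hmin.2 _ hca ⟨a, ha, c, 1, by rw [mul_one, WithOne.coe_mul]⟩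

lemma mul_right_mem (hmin : MinimalJClassOutside J I) (ha : a ∈ J) (hac : a * c ∉ I) :
    a * c ∈ J :=
  hmin.2 _ hac ⟨a, ha, 1, c, by rw [one_mul, WithOne.coe_mul]⟩

lemma mul_mem_of_mul_mul_mem (hmin : MinimalJClassOutside J I) (hI : IsIdeal I) (hy : y ∈ J)
    (h : a * y * b ∈ J) : a * y ∈ J ∧ y * b ∈ J := by
  refine ⟨hmin.mul_left_mem hy fun hay => hmin.1 _ h (hI.mul_mem_right hay b),
    hmin.mul_right_mem hy fun hyb => hmin.1 _ h ?_⟩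
  rw [mul_assoc]
  exact hI.mul_mem_left hyb a

end MinimalJClassOutside

end Ideal

/-- The maximal subgroup of `J` containing `N` is given by its identity `e`, as `H_e`. -/
structure IsINPair (I J N : Set S) (e : S) : Prop where
  ideal : IsIdeal I
  jClass : IsJClass J
  stable : StableSet J
  minimal : MinimalJClassOutside J I
  idem : e * e = e
  mem : e ∈ J
  normal : IsNormalIn N {x : S | GreenH x e} e

section Nu

variable {I J N : Set S} {e a b c : S}

lemma IsINPair.greenR_mul (C : IsINPair I J N e) (ha : a ∈ J) (hac : a * c ∈ J) :
    GreenR (a * c) a :=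
  (C.stable a ha c).1 (C.jClass.greenJ hac ha)

lemma IsINPair.greenL_mul (C : IsINPair I J N e) (ha : a ∈ J) (hca : c * a ∈ J) :
    GreenL (c * a) a :=
  (C.stable a ha c).2 (C.jClass.greenJ hca ha)

lemma IsINPair.greenR_mul_mul (C : IsINPair I J N e) {x y z : S} (hy : y ∈ J)
    (h : x * y * z ∈ J) : GreenR (x * y * z) (x * y) :=
  C.greenR_mul (C.minimal.mul_mem_of_mul_mul_mem C.ideal hy h).1 h

lemma IsINPair.greenL_mul_mul (C : IsINPair I J N e) {x y z : S} (hy : y ∈ J)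
    (h : x * y * z ∈ J) : GreenL (x * y * z) (y * z) := by
  rw [mul_assoc] at h ⊢
  exact C.greenL_mul (C.minimal.mul_mem_of_mul_mul_mem C.ideal hy (by rwa [mul_assoc])).2 h

namespace Nu

lemma symm (h : Nu J N a b) : Nu J N b a := by
  obtain ⟨ha, hb, x, hx, y, hy, s, t, h₁, h₂⟩ := h
  exact ⟨hb, ha, y, hy, x, hx, s, t, h₂, h₁⟩

lemma mul_left (h : Nu J N a b) (hca : c * a ∈ J) (hcb : c * b ∈ J) :
    Nu J N (c * a) (c * b) := by
  obtain ⟨-, -, x, hx, y, hy, s, t, h₁, h₂⟩ := h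
  exact ⟨hca, hcb, x, hx, y, hy, c * s, t, by simp only [WithOne.coe_mul, ← h₁, mul_assoc],
    by simp only [WithOne.coe_mul, ← h₂, mul_assoc]⟩

lemma mul_right (h : Nu J N a b) (hac : a * c ∈ J) (hbc : b * c ∈ J) :
    Nu J N (a * c) (b * c) := by
  obtain ⟨-, -, x, hx, y, hy, s, t, h₁, h₂⟩ := h
  exact ⟨hac, hbc, x, hx, y, hy, s, t * c, by simp only [WithOne.coe_mul, ← h₁, mul_assoc],
    by simp only [WithOne.coe_mul, ← h₂, mul_assoc]⟩

lemma of_mul_mul {x y p q : S} (hx : x ∈ N) (hy : y ∈ N) (ha : p * x * q ∈ J)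
    (hb : p * y * q ∈ J) : Nu J N (p * x * q) (p * y * q) :=
  ⟨ha, hb, x, hx, y, hy, p, q, by push_cast; rfl, by push_cast; rfl⟩

lemma exists_eq_mul_mul (he : e * e = e) (hN : IsNormalIn N {x : S | GreenH x e} e)
    (h : Nu J N a b) : ∃ n ∈ N, ∃ p q : S, p * e * q = a ∧ p * n * q = b := by
  obtain ⟨-, -, x, hx, y, hy, s, t, h₁, h₂⟩ := h
  obtain ⟨p, hp⟩ := exists_mul_coe_eq_coe s e
  obtain ⟨q, hq⟩ := exists_coe_mul_eq_coe e t
  have hpq : ∀ z ∈ N, p * z * q = s * z * t := by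
    intro z hz
    have hze : e * z * e = z := by
      rw [(hN.1 hz).1.symm.mul_eq_of_mul_eq he, (hN.1 hz).2.symm.mul_eq_of_mul_eq he]
    rw [← hp, ← hq]
    conv_rhs => rw [← hze]
    push_cast
    simp only [mul_assoc]
  obtain ⟨x', hx', hxx', -⟩ := hN.2.2.2.1 x hx
  refine ⟨x' * y, hN.2.2.1 x' hx' y hy, p * x, q, ?_, ?_⟩
  · rw [mul_assoc p x, (hN.1 hx).2.symm.mul_eq_of_mul_eq he]
    exact WithOne.coe_inj.1 ((hpq x hx).trans h₁)
  · rw [mul_assoc p x, ← mul_assoc x, hxx', (hN.1 hy).1.symm.mul_eq_of_mul_eq he]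
    exact WithOne.coe_inj.1 ((hpq y hy).trans h₂)

lemma greenH (C : IsINPair I J N e) (h : Nu J N a b) : GreenH a b := by
  obtain ⟨n, hn, p, q, rfl, rfl⟩ := h.exists_eq_mul_mul C.idem C.normal
  have hne : GreenH n e := C.normal.1 hn
  have hnJ : n ∈ J := C.jClass.mem_of_greenJ C.mem hne.1.symm.greenJ
  exact ⟨(C.greenR_mul_mul C.mem h.1).trans
      ((hne.1.symm.mul_left p).trans (C.greenR_mul_mul hnJ h.2.1).symm),
    (C.greenL_mul_mul C.mem h.1).trans
      ((hne.2.symm.mul_right q).trans (C.greenL_mul_mul hnJ h.2.1).symm)⟩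

end Nu

lemma IsINPair.exists_greenH_of_mul_mul_eq (C : IsINPair I J N e) {P Q P' Q' : S}
    (hb : P * e * Q ∈ J) (hPQ : P * e * Q = P' * e * Q') :
    ∃ g h : S, GreenH g e ∧ GreenH h e ∧ g * h = e ∧
      P * e * g = P' * e ∧ h * (e * Q) = e * Q' := by
  have he := C.idem
  obtain ⟨hPe, heQ⟩ := C.minimal.mul_mem_of_mul_mul_mem C.ideal C.mem hb
  have hb' : P' * e * Q' ∈ J := hPQ ▸ hb
  obtain ⟨hPe', heQ'⟩ := C.minimal.mul_mem_of_mul_mul_mem C.ideal C.mem hb'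
  obtain ⟨α, hα⟩ := exists_mul_eq_of_greenL he (C.greenL_mul C.mem hPe)
  obtain ⟨β, hβ⟩ := exists_mul_eq_of_greenR he (C.greenR_mul C.mem heQ)
  have hee : ∀ X Y : S, X * e * (e * Y) = X * e * Y := fun X Y => by
    rw [← mul_assoc, mul_assoc X e e, he]
  have hgh : α * (P' * e) * (e * Q' * β) = e := calc
    _ = α * (P' * e * (e * Q')) * β := by simp only [mul_assoc]
    _ = α * (P * e) * (e * Q * β) := by rw [hee, ← hPQ, ← hee]; simp only [mul_assoc]
    _ = e := by rw [hα, hβ, he]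
  refine ⟨α * (P' * e), e * Q' * β, ?_, ?_, hgh, ?_, ?_⟩
  · have hgJ := C.minimal.mul_left_mem hPe' fun hg =>
      C.minimal.1 e C.mem (hgh ▸ C.ideal.mul_mem_right hg _)
    have hge := C.greenR_mul hgJ (hgh.symm ▸ C.mem)
    rw [hgh] at hge
    exact ⟨hge.symm, (C.greenL_mul hPe' hgJ).trans (C.greenL_mul C.mem hPe')⟩
  · have hhJ := C.minimal.mul_right_mem heQ' fun hh =>
      C.minimal.1 e C.mem (hgh ▸ C.ideal.mul_mem_left hh _)
    have hhe := C.greenL_mul hhJ (hgh.symm ▸ C.mem)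
    rw [hgh] at hhe
    exact ⟨(C.greenR_mul heQ' hhJ).trans (C.greenR_mul C.mem heQ'), hhe.symm⟩
  · have hR' := C.greenR_mul_mul C.mem hb'
    rw [← hPQ] at hR'
    exact mul_mul_eq_of_greenR hα (by rw [mul_assoc, he])
      ((C.greenR_mul_mul C.mem hb).symm.trans hR')
  · have hL' := C.greenL_mul_mul C.mem hb'
    rw [← hPQ] at hL'
    exact mul_mul_eq_of_greenL hβ (by rw [← mul_assoc, he])
      ((C.greenL_mul_mul C.mem hb).symm.trans hL')

/-- Since `N` is normal in `H_e`, the normal form of a `ν_N`-pair does not depend on the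
factorisation `P e Q` of its first entry. -/
lemma IsINPair.exists_mul_mul_eq (C : IsINPair I J N e) {P Q P' Q' m : S}
    (hb : P * e * Q ∈ J) (hPQ : P * e * Q = P' * e * Q') (hm : m ∈ N) :
    ∃ m' ∈ N, P * m' * Q = P' * m * Q' := by
  obtain ⟨g, h, hg, hh, hgh, hPg, hhQ⟩ := C.exists_greenH_of_mul_mul_eq hb hPQ
  have hm' : g * m * h ∈ N :=
    C.normal.2.2.2.2 g hg h hh hgh (mul_eq_of_mul_eq_idem C.idem hg hh.1 hgh) m hm
  have hme : ∀ z ∈ N, e * z * e = z := fun z hz => by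
    rw [(C.normal.1 hz).1.symm.mul_eq_of_mul_eq C.idem,
      (C.normal.1 hz).2.symm.mul_eq_of_mul_eq C.idem]
  refine ⟨g * m * h, hm', ?_⟩
  calc P * (g * m * h) * Q = P * e * g * m * (h * (e * Q)) := by
        rw [← hme _ hm']; simp only [mul_assoc]
    _ = P' * (e * m * e) * Q' := by rw [hPg, hhQ]; simp only [mul_assoc]
    _ = P' * m * Q' := by rw [hme m hm]

lemma Nu.trans (C : IsINPair I J N e) (h₁ : Nu J N a b) (h₂ : Nu J N b c) : Nu J N a c := by
  obtain ⟨n, hn, p, q, rfl, rfl⟩ := h₁.exists_eq_mul_mul C.idem C.normal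
  obtain ⟨m, hm, p', q', hb, rfl⟩ := h₂.exists_eq_mul_mul C.idem C.normal
  have hne : p * n * e * q = p * n * q := by
    rw [mul_assoc p n e, (C.normal.1 hn).2.symm.mul_eq_of_mul_eq C.idem]
  obtain ⟨m', hm', hc⟩ := C.exists_mul_mul_eq (hne ▸ h₁.2.1) (hne.trans hb.symm) hm
  rw [← hc, mul_assoc p n m']
  exact Nu.of_mul_mul C.normal.2.1 (C.normal.2.2.1 n hn m' hm') h₁.1
    (by rw [← mul_assoc p n m', hc]; exact h₂.2.1)

lemma IsINPair.nu_mul_left (C : IsINPair I J N e) (h : Nu J N a b) (c : S) :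
    Nu J N (c * a) (c * b) ∨ (c * a ∈ I ∧ c * b ∈ I) := by
  have hR := (h.greenH C).1.mul_left c
  by_cases hca : c * a ∈ I
  · exact Or.inr ⟨hca, C.ideal.mem_of_greenR hca hR⟩
  · have hcb : c * b ∉ I := fun hcb => hca (C.ideal.mem_of_greenR hcb hR.symm)
    exact Or.inl (h.mul_left (C.minimal.mul_left_mem h.1 hca) (C.minimal.mul_left_mem h.2.1 hcb))

lemma IsINPair.nu_mul_right (C : IsINPair I J N e) (h : Nu J N a b) (c : S) :
    Nu J N (a * c) (b * c) ∨ (a * c ∈ I ∧ b * c ∈ I) := by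
  have hL := (h.greenH C).2.mul_right c
  by_cases hac : a * c ∈ I
  · exact Or.inr ⟨hac, C.ideal.mem_of_greenL hac hL⟩
  · have hbc : b * c ∉ I := fun hbc => hac (C.ideal.mem_of_greenL hbc hL.symm)
    exact Or.inl (h.mul_right (C.minimal.mul_right_mem h.1 hac) (C.minimal.mul_right_mem h.2.1 hbc))

end Nu

/-- `Δ_S ∪ ν_N ∪ (θ ∩ I × I)`: `λ_C`, `ρ_C`, `μ_C` and `R_C` are all of this form. -/
def INRel (I J N : Set S) (θ : S → S → Prop) (x y : S) : Prop :=
  x = y ∨ Nu J N x y ∨ (x ∈ I ∧ y ∈ I ∧ θ x y)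

section INRel

variable {I J N : Set S} {e : S} {θ : S → S → Prop}

lemma IsINPair.isCongruence_inRel (C : IsINPair I J N e) (hθ : Equivalence θ)
    (hθI : ∀ x ∈ I, ∀ y ∈ I, θ x y → ∀ c, θ (c * x) (c * y) ∧ θ (x * c) (y * c))
    (hθν : ∀ a b c, Nu J N a b →
      (c * a ∈ I → θ (c * a) (c * b)) ∧ (a * c ∈ I → θ (a * c) (b * c))) :
    IsCongruence (INRel I J N θ) := by
  have hJI : ∀ a ∈ J, a ∉ I := C.minimal.1
  refine ⟨⟨fun _ => Or.inl rfl, ?_, ?_⟩, ?_⟩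
  · rintro x y (rfl | h | ⟨hx, hy, h⟩)
    · exact Or.inl rfl
    · exact Or.inr (Or.inl h.symm)
    · exact Or.inr (Or.inr ⟨hy, hx, hθ.symm h⟩)
  · rintro x y z (rfl | h₁ | ⟨hx, hy, h₁⟩) h₂
    · exact h₂
    · rcases h₂ with rfl | h₂ | ⟨hy, -, -⟩
      · exact Or.inr (Or.inl h₁)
      · exact Or.inr (Or.inl (h₁.trans C h₂))
      · exact absurd hy (hJI y h₁.2.1)
    · rcases h₂ with rfl | h₂ | ⟨-, hz, h₂⟩
      · exact Or.inr (Or.inr ⟨hx, hy, h₁⟩)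
      · exact absurd hy (hJI y h₂.1)
      · exact Or.inr (Or.inr ⟨hx, hz, hθ.trans h₁ h₂⟩)
  · rintro a b c (rfl | h | ⟨ha, hb, h⟩)
    · exact ⟨Or.inl rfl, Or.inl rfl⟩
    · refine ⟨?_, ?_⟩
      · rcases C.nu_mul_left h c with h' | ⟨hca, hcb⟩
        · exact Or.inr (Or.inl h')
        · exact Or.inr (Or.inr ⟨hca, hcb, (hθν a b c h).1 hca⟩)
      · rcases C.nu_mul_right h c with h' | ⟨hac, hbc⟩
        · exact Or.inr (Or.inl h')
        · exact Or.inr (Or.inr ⟨hac, hbc, (hθν a b c h).2 hac⟩)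
    · obtain ⟨hl, hr⟩ := hθI a ha b hb h c
      exact ⟨Or.inr (Or.inr ⟨C.ideal.mul_mem_left ha c, C.ideal.mul_mem_left hb c, hl⟩),
        Or.inr (Or.inr ⟨C.ideal.mul_mem_right ha c, C.ideal.mul_mem_right hb c, hr⟩)⟩

lemma IsINPair.isCongruence_rRel (C : IsINPair I J N e) : IsCongruence (RRel I J N) := by
  have h : RRel I J N = INRel I J N fun _ _ => True := by
    funext x y
    simp only [RRel, INRel, and_true]
  rw [h]
  exact C.isCongruence_inRel ⟨fun _ => trivial, fun _ => trivial, fun _ _ => trivial⟩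
    (fun _ _ _ _ _ _ => ⟨trivial, trivial⟩)
    fun _ _ _ _ => ⟨fun _ => trivial, fun _ => trivial⟩

lemma INRel.rRel {x y : S} (h : INRel I J N θ x y) : RRel I J N x y := by
  rcases h with rfl | h | ⟨hx, hy, -⟩
  exacts [Or.inl rfl, Or.inr (Or.inl h), Or.inr (Or.inr ⟨hx, hy⟩)]

end INRel

section MinIdeal

variable {M : Set S} {m z : S}

lemma IsMinIdeal.exists_mul_mul_eq (hM : IsMinIdeal M) (m : S) (hz : z ∈ M) :
    ∃ u v : WithOne S, u * m * v = z := by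
  refine hM.2 {x | ∃ u v : WithOne S, u * m * v = x} ⟨⟨m, 1, 1, by simp⟩, ?_⟩ hz
  rintro x ⟨u, v, huv⟩ a
  exact ⟨⟨a * u, v, by rw [WithOne.coe_mul, ← huv]; simp only [mul_assoc]⟩,
    ⟨u, v * a, by rw [WithOne.coe_mul, ← huv]; simp only [mul_assoc]⟩⟩

lemma IsMinIdeal.greenJ (hM : IsMinIdeal M) (hm : m ∈ M) (hz : z ∈ M) : GreenJ m z :=
  ⟨hM.exists_mul_mul_eq m hz, hM.exists_mul_mul_eq z hm⟩

lemma IsMinIdeal.greenL_mul (hM : IsMinIdeal M) (hMs : StableSet M) (hz : z ∈ M) (a : S) :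
    GreenL (a * z) z :=
  (hMs z hz a).2 (hM.greenJ (hM.1.mul_mem_left hz a) hz)

lemma IsMinIdeal.greenR_mul (hM : IsMinIdeal M) (hMs : StableSet M) (hz : z ∈ M) (a : S) :
    GreenR (z * a) z :=
  (hMs z hz a).1 (hM.greenJ (hM.1.mul_mem_right hz a) hz)

lemma IsMinIdeal.exists_mul_eq_self (hM : IsMinIdeal M) (hMs : StableSet M) (hz : z ∈ M) :
    ∃ h ∈ M, h * z = z := by
  obtain ⟨⟨u, hu⟩, -⟩ := hM.greenL_mul hMs hz z
  obtain ⟨h, hh, huz⟩ := hM.1.exists_mul_coe_mem hz u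
  refine ⟨h, hh, WithOne.coe_inj.1 ?_⟩
  rw [WithOne.coe_mul, ← huz, mul_assoc, ← WithOne.coe_mul, hu]

lemma IsMinIdeal.exists_self_mul_eq (hM : IsMinIdeal M) (hMs : StableSet M) (hz : z ∈ M) :
    ∃ k ∈ M, z * k = z := by
  obtain ⟨⟨u, hu⟩, -⟩ := hM.greenR_mul hMs hz z
  obtain ⟨k, hk, hzu⟩ := hM.1.exists_coe_mul_mem hz u
  refine ⟨k, hk, WithOne.coe_inj.1 ?_⟩
  rw [WithOne.coe_mul, ← hzu, ← mul_assoc, ← WithOne.coe_mul, hu]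

end MinIdeal

structure StableRetraction (M I : Set S) (f : S → S) : Prop where
  minIdeal : IsMinIdeal M
  stable : StableSet M
  ideal : IsIdeal I
  retraction : IsRetraction I M f

namespace StableRetraction

variable {M I J N : Set S} {f : S → S} {e a b c m x y : S}

lemma subset (F : StableRetraction M I f) : M ⊆ I := F.minIdeal.2 I F.ideal

lemma apply_mem (F : StableRetraction M I f) (hx : x ∈ I) : f x ∈ M := F.retraction.1 x hx

lemma apply_of_mem (F : StableRetraction M I f) (hm : m ∈ M) : f m = m := F.retraction.2.2 m hm

lemma mul_apply (F : StableRetraction M I f) (hm : m ∈ M) (hx : x ∈ I) :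
    m * f x = m * x := by
  rw [← F.apply_of_mem hm, ← F.retraction.2.1 m (F.subset hm) x hx, F.apply_of_mem hm,
    F.apply_of_mem (F.minIdeal.1.mul_mem_right hm x)]

lemma apply_mul (F : StableRetraction M I f) (hx : x ∈ I) (hm : m ∈ M) :
    f x * m = x * m := by
  rw [← F.apply_of_mem hm, ← F.retraction.2.1 x hx m (F.subset hm), F.apply_of_mem hm,
    F.apply_of_mem (F.minIdeal.1.mul_mem_left hm x)]

lemma greenL_apply_mul_left (F : StableRetraction M I f) (hx : x ∈ I) (c : S) :
    GreenL (f (c * x)) (f x) := by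
  have hcx : c * x ∈ I := F.ideal.mul_mem_left hx c
  obtain ⟨h, hh, hhf⟩ := F.minIdeal.exists_mul_eq_self F.stable (F.apply_mem hcx)
  have hhc : h * c ∈ M := F.minIdeal.1.mul_mem_right hh c
  have : f (c * x) = h * c * f x := by
    rw [← hhf, F.mul_apply hh hcx, ← mul_assoc, F.mul_apply hhc hx]
  rw [this]
  exact F.minIdeal.greenL_mul F.stable (F.apply_mem hx) _

lemma greenL_apply_mul_right (F : StableRetraction M I f) (hx : x ∈ I) (c : S) :
    GreenL (f (x * c)) (f x * c) := by
  have hxc : x * c ∈ I := F.ideal.mul_mem_right hx c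
  obtain ⟨h, hh, hhf⟩ := F.minIdeal.exists_mul_eq_self F.stable (F.apply_mem hxc)
  have : f (x * c) = h * (f x * c) := by
    rw [← hhf, F.mul_apply hh hxc, ← mul_assoc, ← mul_assoc, F.mul_apply hh hx]
  rw [this]
  exact F.minIdeal.greenL_mul F.stable (F.minIdeal.1.mul_mem_right (F.apply_mem hx) c) _

lemma greenR_apply_mul_right (F : StableRetraction M I f) (hx : x ∈ I) (c : S) :
    GreenR (f (x * c)) (f x) := by
  have hxc : x * c ∈ I := F.ideal.mul_mem_right hx c
  obtain ⟨k, hk, hfk⟩ := F.minIdeal.exists_self_mul_eq F.stable (F.apply_mem hxc)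
  have hck : c * k ∈ M := F.minIdeal.1.mul_mem_left hk c
  have : f (x * c) = f x * (c * k) := by
    rw [← hfk, F.apply_mul hxc hk, mul_assoc, F.apply_mul hx hck]
  rw [this]
  exact F.minIdeal.greenR_mul F.stable (F.apply_mem hx) _

lemma greenR_apply_mul_left (F : StableRetraction M I f) (hx : x ∈ I) (c : S) :
    GreenR (f (c * x)) (c * f x) := by
  have hcx : c * x ∈ I := F.ideal.mul_mem_left hx c
  obtain ⟨k, hk, hfk⟩ := F.minIdeal.exists_self_mul_eq F.stable (F.apply_mem hcx)
  have : f (c * x) = c * f x * k := by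
    rw [← hfk, F.apply_mul hcx hk, mul_assoc, mul_assoc, F.apply_mul hx hk]
  rw [this]
  exact F.minIdeal.greenR_mul F.stable (F.minIdeal.1.mul_mem_left (F.apply_mem hx) c) _

lemma greenR_apply (F : StableRetraction M I f) (hx : x ∈ I) (h : GreenR x y) :
    GreenR (f x) (f y) := by
  obtain ⟨⟨u, hu⟩, -⟩ := h
  induction u using WithOne.recOneCoe with
  | one =>
    rw [mul_one, WithOne.coe_inj] at hu
    exact hu ▸ GreenR.refl _
  | coe c =>
    rw [← WithOne.coe_mul, WithOne.coe_inj] at hu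
    exact hu ▸ (F.greenR_apply_mul_right hx c).symm

lemma greenL_apply (F : StableRetraction M I f) (hx : x ∈ I) (h : GreenL x y) :
    GreenL (f x) (f y) := by
  obtain ⟨⟨u, hu⟩, -⟩ := h
  induction u using WithOne.recOneCoe with
  | one =>
    rw [one_mul, WithOne.coe_inj] at hu
    exact hu ▸ GreenL.refl _
  | coe c =>
    rw [← WithOne.coe_mul, WithOne.coe_inj] at hu
    exact hu ▸ (F.greenL_apply_mul_left hx c).symm

lemma greenL_apply_mul (F : StableRetraction M I f) (hx : x ∈ I) (hy : y ∈ I)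
    (h : GreenL (f x) (f y)) (c : S) :
    GreenL (f (c * x)) (f (c * y)) ∧ GreenL (f (x * c)) (f (y * c)) :=
  ⟨(F.greenL_apply_mul_left hx c).trans (h.trans (F.greenL_apply_mul_left hy c).symm),
    (F.greenL_apply_mul_right hx c).trans
      ((h.mul_right c).trans (F.greenL_apply_mul_right hy c).symm)⟩

lemma greenR_apply_mul (F : StableRetraction M I f) (hx : x ∈ I) (hy : y ∈ I)
    (h : GreenR (f x) (f y)) (c : S) :
    GreenR (f (c * x)) (f (c * y)) ∧ GreenR (f (x * c)) (f (y * c)) :=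
  ⟨(F.greenR_apply_mul_left hx c).trans
      ((h.mul_left c).trans (F.greenR_apply_mul_left hy c).symm),
    (F.greenR_apply_mul_right hx c).trans (h.trans (F.greenR_apply_mul_right hy c).symm)⟩

/-- Elements of `M` cannot tell `e` from `n ∈ N`, so `f` identifies `c a` and `c b` when they
fall into `I`. -/
lemma apply_mul_left_eq_of_nu (F : StableRetraction M I f) (he : e * e = e)
    (hN : IsNormalIn N {x : S | GreenH x e} e)
    (hact : ∀ x ∈ M, ∀ a ∈ N, ∀ b ∈ N, x * a = x * b ∧ a * x = b * x)
    (h : Nu J N a b) (hab : GreenR a b) (hca : c * a ∈ I) : f (c * a) = f (c * b) := by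
  have hcb : c * b ∈ I := F.ideal.mem_of_greenR hca (hab.mul_left c)
  obtain ⟨k, hk, hkf⟩ := F.minIdeal.exists_mul_eq_self F.stable (F.apply_mem hca)
  obtain ⟨n, hn, p, q, rfl, rfl⟩ := h.exists_eq_mul_mul he hN
  have hkcp : k * c * p ∈ M := F.minIdeal.1.mul_mem_right (F.minIdeal.1.mul_mem_right hk c) p
  calc f (c * (p * e * q)) = k * (c * (p * e * q)) := by rw [← F.mul_apply hk hca, hkf]
    _ = k * c * p * e * q := by simp only [mul_assoc]
    _ = k * c * p * n * q := by rw [(hact _ hkcp e hN.2.1 n hn).1]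
    _ = k * f (c * (p * n * q)) := by rw [F.mul_apply hk hcb]; simp only [mul_assoc]
    _ = f (c * (p * n * q)) := (F.greenR_apply hca (hab.mul_left c)).mul_eq_of_mul_eq hkf

lemma apply_mul_right_eq_of_nu (F : StableRetraction M I f) (he : e * e = e)
    (hN : IsNormalIn N {x : S | GreenH x e} e)
    (hact : ∀ x ∈ M, ∀ a ∈ N, ∀ b ∈ N, x * a = x * b ∧ a * x = b * x)
    (h : Nu J N a b) (hab : GreenL a b) (hac : a * c ∈ I) : f (a * c) = f (b * c) := by
  have hbc : b * c ∈ I := F.ideal.mem_of_greenL hac (hab.mul_right c)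
  obtain ⟨k, hk, hfk⟩ := F.minIdeal.exists_self_mul_eq F.stable (F.apply_mem hac)
  obtain ⟨n, hn, p, q, rfl, rfl⟩ := h.exists_eq_mul_mul he hN
  have hqck : q * (c * k) ∈ M := F.minIdeal.1.mul_mem_left (F.minIdeal.1.mul_mem_left hk c) q
  calc f (p * e * q * c) = p * (e * (q * (c * k))) := by
        rw [← hfk, F.apply_mul hac hk]; simp only [mul_assoc]
    _ = p * (n * (q * (c * k))) := by rw [(hact _ hqck e hN.2.1 n hn).2]
    _ = f (p * n * q * c) * k := by rw [F.apply_mul hbc hk]; simp only [mul_assoc]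
    _ = f (p * n * q * c) := (F.greenL_apply hac (hab.mul_right c)).mul_eq_of_mul_eq hfk

end StableRetraction

section Congruences

variable {M I J N : Set S} {e : S} {f : S → S}

lemma IsINPair.isCongruence_inRel_retraction (C : IsINPair I J N e) (F : StableRetraction M I f)
    (hact : ∀ x ∈ M, ∀ a ∈ N, ∀ b ∈ N, x * a = x * b ∧ a * x = b * x)
    {T : S → S → Prop} (hT : Equivalence T)
    (hTmul : ∀ x ∈ I, ∀ y ∈ I, T (f x) (f y) → ∀ c,
      T (f (c * x)) (f (c * y)) ∧ T (f (x * c)) (f (y * c))) :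
    IsCongruence (INRel I J N fun x y => T (f x) (f y)) :=
  C.isCongruence_inRel (hT.comap f) hTmul fun _ _ _ h =>
    ⟨fun hca => by
      rw [F.apply_mul_left_eq_of_nu C.idem C.normal hact h (h.greenH C).1 hca]
      exact hT.refl _,
    fun hac => by
      rw [F.apply_mul_right_eq_of_nu C.idem C.normal hact h (h.greenH C).2 hac]
      exact hT.refl _⟩

lemma IsINPair.isCongruence_lamRel (C : IsINPair I J N e) (F : StableRetraction M I f)
    (hact : ∀ x ∈ M, ∀ a ∈ N, ∀ b ∈ N, x * a = x * b ∧ a * x = b * x) :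
    IsCongruence (LamRel I J N f) :=
  C.isCongruence_inRel_retraction F hact ⟨GreenL.refl, GreenL.symm, GreenL.trans⟩
    fun _ hx _ hy => F.greenL_apply_mul hx hy

lemma IsINPair.isCongruence_rhoRel (C : IsINPair I J N e) (F : StableRetraction M I f)
    (hact : ∀ x ∈ M, ∀ a ∈ N, ∀ b ∈ N, x * a = x * b ∧ a * x = b * x) :
    IsCongruence (RhoRel I J N f) :=
  C.isCongruence_inRel_retraction F hact ⟨GreenR.refl, GreenR.symm, GreenR.trans⟩
    fun _ hx _ hy => F.greenR_apply_mul hx hy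

lemma IsINPair.isCongruence_muRel (C : IsINPair I J N e) (F : StableRetraction M I f)
    (hact : ∀ x ∈ M, ∀ a ∈ N, ∀ b ∈ N, x * a = x * b ∧ a * x = b * x) :
    IsCongruence (MuRel I J N f) :=
  C.isCongruence_inRel_retraction F hact ⟨GreenH.refl, GreenH.symm, GreenH.trans⟩
    fun _ hx _ hy h c =>
      have hR := F.greenR_apply_mul hx hy h.1 c
      have hL := F.greenL_apply_mul hx hy h.2 c
      ⟨⟨hR.1, hL.1⟩, ⟨hR.2, hL.2⟩⟩

end Congruences

section Lattice

variable {M I J N : Set S} {f : S → S}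

/-- The witness is `(x, y x)` for `x, y ∈ M` in distinct `R`-classes. -/
lemma StableRetraction.not_lamRel_le_rhoRel (F : StableRetraction M I f)
    (hJI : ∀ a ∈ J, a ∉ I) (hR2 : ∃ x ∈ M, ∃ y ∈ M, ¬ GreenR x y) :
    ¬ ∀ x y : S, LamRel I J N f x y → RhoRel I J N f x y := by
  intro hle
  obtain ⟨x, hx, y, hy, hxy⟩ := hR2
  have hyx : y * x ∈ M := F.minIdeal.1.mul_mem_left hx y
  have hR : GreenR (y * x) y := F.minIdeal.greenR_mul F.stable hy x
  have hL : GreenL (f x) (f (y * x)) := by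
    rw [F.apply_of_mem hx, F.apply_of_mem hyx]
    exact (F.minIdeal.greenL_mul F.stable hx y).symm
  rcases hle x (y * x) (Or.inr (Or.inr ⟨F.subset hx, F.subset hyx, hL⟩))
    with h | h | ⟨-, -, h⟩
  · exact hxy (by rw [h]; exact hR)
  · exact hJI x h.1 (F.subset hx)
  · rw [F.apply_of_mem hx, F.apply_of_mem hyx] at h
    exact hxy (h.trans hR)

lemma StableRetraction.not_rhoRel_le_lamRel (F : StableRetraction M I f)
    (hJI : ∀ a ∈ J, a ∉ I) (hL2 : ∃ x ∈ M, ∃ y ∈ M, ¬ GreenL x y) :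
    ¬ ∀ x y : S, RhoRel I J N f x y → LamRel I J N f x y := by
  intro hle
  obtain ⟨x, hx, y, hy, hxy⟩ := hL2
  have hxy' : x * y ∈ M := F.minIdeal.1.mul_mem_right hx y
  have hL : GreenL (x * y) y := F.minIdeal.greenL_mul F.stable hy x
  have hR : GreenR (f x) (f (x * y)) := by
    rw [F.apply_of_mem hx, F.apply_of_mem hxy']
    exact (F.minIdeal.greenR_mul F.stable hx y).symm
  rcases hle x (x * y) (Or.inr (Or.inr ⟨F.subset hx, F.subset hxy', hR⟩))
    with h | h | ⟨-, -, h⟩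
  · exact hxy (by rw [h]; exact hL)
  · exact hJI x h.1 (F.subset hx)
  · rw [F.apply_of_mem hx, F.apply_of_mem hxy'] at h
    exact hxy (h.trans hL)

lemma lamRel_and_rhoRel_iff (hJI : ∀ a ∈ J, a ∉ I) (x y : S) :
    LamRel I J N f x y ∧ RhoRel I J N f x y ↔ MuRel I J N f x y := by
  constructor
  · rintro ⟨rfl | h | ⟨hx, hy, hL⟩, h'⟩
    · exact Or.inl rfl
    · exact Or.inr (Or.inl h)
    · rcases h' with rfl | h' | ⟨-, -, hR⟩
      · exact Or.inl rfl
      · exact absurd hx (hJI x h'.1)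
      · exact Or.inr (Or.inr ⟨hx, hy, hR, hL⟩)
  · rintro (rfl | h | ⟨hx, hy, hH⟩)
    · exact ⟨Or.inl rfl, Or.inl rfl⟩
    · exact ⟨Or.inr (Or.inl h), Or.inr (Or.inl h)⟩
    · exact ⟨Or.inr (Or.inr ⟨hx, hy, hH.2⟩), Or.inr (Or.inr ⟨hx, hy, hH.1⟩)⟩

/-- Any `x, y ∈ I` are linked by the chain `x λ f x ρ (f x)(f y) λ f y λ y`. -/
lemma StableRetraction.rRel_le_of_le (F : StableRetraction M I f) {θ : S → S → Prop}
    (hθ : Equivalence θ) (hlam : ∀ x y : S, LamRel I J N f x y → θ x y)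
    (hrho : ∀ x y : S, RhoRel I J N f x y → θ x y) (x y : S) (h : RRel I J N x y) :
    θ x y := by
  rcases h with rfl | h | ⟨hx, hy⟩
  · exact hθ.refl x
  · exact hlam x y (Or.inr (Or.inl h))
  · have hfx := F.apply_mem hx
    have hfy := F.apply_mem hy
    have hfxy : f x * f y ∈ M := F.minIdeal.1.mul_mem_right hfx (f y)
    have h₁ : θ x (f x) := hlam _ _ (Or.inr (Or.inr ⟨hx, F.subset hfx,
      by rw [F.apply_of_mem hfx]; exact GreenL.refl _⟩))
    have h₂ : θ (f x) (f x * f y) := hrho _ _ (Or.inr (Or.inr ⟨F.subset hfx, F.subset hfxy,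
      by rw [F.apply_of_mem hfx, F.apply_of_mem hfxy]
         exact (F.minIdeal.greenR_mul F.stable hfx (f y)).symm⟩))
    have h₃ : θ (f x * f y) (f y) := hlam _ _ (Or.inr (Or.inr ⟨F.subset hfxy, F.subset hfy,
      by rw [F.apply_of_mem hfxy, F.apply_of_mem hfy]
         exact F.minIdeal.greenL_mul F.stable hfy (f x)⟩))
    have h₄ : θ (f y) y := hlam _ _ (Or.inr (Or.inr ⟨F.subset hfy, hy,
      by rw [F.apply_of_mem hfy]; exact GreenL.refl _⟩))
    exact hθ.trans (hθ.trans (hθ.trans h₁ h₂) h₃) h₄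

end Lattice

end SG

theorem stmt10_general {S : Type*} [Semigroup S] (M I J N : Set S) (e : S) (f : S → S)
    (hM : SG.IsMinIdeal M) (hMs : SG.StableSet M)
    (hR2 : ∃ x ∈ M, ∃ y ∈ M, ¬ SG.GreenR x y)
    (hL2 : ∃ x ∈ M, ∃ y ∈ M, ¬ SG.GreenL x y)
    (hI : SG.IsIdeal I) (hf : SG.IsRetraction I M f)
    (hJ : SG.IsJClass J) (hJs : SG.StableSet J)
    (hmin : SG.MinimalJClassOutside J I)
    (he : e * e = e) (heJ : e ∈ J)
    (hN : SG.IsNormalIn N {x : S | SG.GreenH x e} e)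
    (hact : ∀ x ∈ M, ∀ a ∈ N, ∀ b ∈ N, x * a = x * b ∧ a * x = b * x) :
    SG.IsCongruence (SG.LamRel I J N f) ∧
    SG.IsCongruence (SG.RhoRel I J N f) ∧
    SG.IsCongruence (SG.MuRel I J N f) ∧
    SG.IsCongruence (SG.RRel I J N) ∧
    (¬ ∀ x y : S, SG.LamRel I J N f x y → SG.RhoRel I J N f x y) ∧
    (¬ ∀ x y : S, SG.RhoRel I J N f x y → SG.LamRel I J N f x y) ∧
    (∀ x y : S, (SG.LamRel I J N f x y ∧ SG.RhoRel I J N f x y) ↔ SG.MuRel I J N f x y) ∧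
    (∀ x y : S, SG.LamRel I J N f x y → SG.RRel I J N x y) ∧
    (∀ x y : S, SG.RhoRel I J N f x y → SG.RRel I J N x y) ∧
    (∀ θ : S → S → Prop, SG.IsCongruence θ →
      (∀ x y : S, SG.LamRel I J N f x y → θ x y) →
      (∀ x y : S, SG.RhoRel I J N f x y → θ x y) →
      ∀ x y : S, SG.RRel I J N x y → θ x y) := by
  have C : SG.IsINPair I J N e := ⟨hI, hJ, hJs, hmin, he, heJ, hN⟩
  have F : SG.StableRetraction M I f := ⟨hM, hMs, hI, hf⟩
  exact ⟨C.isCongruence_lamRel F hact, C.isCongruence_rhoRel F hact,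
    C.isCongruence_muRel F hact, C.isCongruence_rRel,
    F.not_lamRel_le_rhoRel hmin.1 hR2, F.not_rhoRel_le_lamRel hmin.1 hL2,
    SG.lamRel_and_rhoRel_iff hmin.1,
    fun _ _ => SG.INRel.rRel (θ := fun x y => SG.GreenL (f x) (f y)),
    fun _ _ => SG.INRel.rRel (θ := fun x y => SG.GreenR (f x) (f y)),
    fun _ hθ => F.rRel_le_of_le hθ.1⟩

/-- Let `S` be a semigroup with a stable minimal ideal `M` having at
least two `R`-classes and at least two `L`-classes, and let `C = (I, N)` be a retractable
IN-pair with retraction `f : I → M`.  Then `λ_C` and `ρ_C` are incomparable congruences,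
their intersection is `μ_C` and their join is `R_C`. -/
theorem stmt10 {S : Type*} [Semigroup S] (M I J N : Set S) (e : S) (f : S → S)
    (hM : SG.IsMinIdeal M) (hMs : SG.StableSet M)
    (hR2 : ∃ x ∈ M, ∃ y ∈ M, ¬ SG.GreenR x y)
    (hL2 : ∃ x ∈ M, ∃ y ∈ M, ¬ SG.GreenL x y)
    (hI : SG.IsIdeal I) (hf : SG.IsRetraction I M f)
    (hJ : SG.IsJClass J) (hJs : SG.StableSet J) (hJr : SG.RegularSet J)
    (hmin : SG.MinimalJClassOutside J I)
    (he : e * e = e) (heJ : e ∈ J)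
    (hN : SG.IsNormalIn N {x : S | SG.GreenH x e} e)
    (hact : ∀ x ∈ M, ∀ a ∈ N, ∀ b ∈ N, x * a = x * b ∧ a * x = b * x) :
    SG.IsCongruence (SG.LamRel I J N f) ∧
    SG.IsCongruence (SG.RhoRel I J N f) ∧
    SG.IsCongruence (SG.MuRel I J N f) ∧
    SG.IsCongruence (SG.RRel I J N) ∧
    (¬ ∀ x y : S, SG.LamRel I J N f x y → SG.RhoRel I J N f x y) ∧
    (¬ ∀ x y : S, SG.RhoRel I J N f x y → SG.LamRel I J N f x y) ∧
    (∀ x y : S, (SG.LamRel I J N f x y ∧ SG.RhoRel I J N f x y) ↔ SG.MuRel I J N f x y) ∧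
    (∀ x y : S, SG.LamRel I J N f x y → SG.RRel I J N x y) ∧
    (∀ x y : S, SG.RhoRel I J N f x y → SG.RRel I J N x y) ∧
    (∀ θ : S → S → Prop, SG.IsCongruence θ →
      (∀ x y : S, SG.LamRel I J N f x y → θ x y) →
      (∀ x y : S, SG.RhoRel I J N f x y → θ x y) →
      ∀ x y : S, SG.RRel I J N x y → θ x y) :=
  stmt10_general M I J N e f hM hMs hR2 hL2 hI hf hJ hJs hmin he heJ hN hact
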